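/- arXiv:2206.03873 — 2 statements merged into one kernel-verified Lean document; each statement's English description precedes it below -/
import Mathlib

section
/- (Gevrey product estimate) Let r ≥ 0 and s > 1/2. There is a constant C = C(r,s) such that for all f, g in the Gevrey class, |fg|_{X^r} ≤ C |f|_{X^s} |g|_{X^r} + C |f|_{X^r} |g|_{X^s}, where |f|_{X^r} = ‖⟨k⟩^r e^{Φ(t,k)} f̂(k)‖_{ℓ²(ℤ)} and Φ(t,k) = τ⟨k⟩^{2/3} with τ ≥ 0. -/
/-!
Since `t ↦ t ^ (2/3)` is subadditive and `⟨·⟩` satisfies the triangle inequality, the exponent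
`Φ(k) = τ⟨k⟩^(2/3)` is subadditive; together with `⟨k⟩^r ≤ 2^r (⟨k - ℓ⟩^r + ⟨ℓ⟩^r)` this bounds the
`X^r` weight at `k` by `2^r` times a sum of two products of weights at `k - ℓ` and `ℓ`, one of
them carrying no power of `⟨·⟩`. Each of the two resulting convolutions is estimated by Young's
inequality `ℓ² * ℓ¹ ⊆ ℓ²`, and Cauchy–Schwarz gives `‖e^Φ f̂‖_{ℓ¹} ≤ ‖⟨·⟩^(-s)‖_{ℓ²} |f|_{X^s}`,
which is finite because `2s > 1`.

All estimates are made for `ℝ≥0∞`-valued sequences, where every series converges; summability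
only enters when the `ℝ≥0∞` bound is converted back into real norms.
-/

/-- Japanese bracket `⟨k⟩ = (1+k²)^(1/2)` for `k : ℤ`. -/
noncomputable def jap (k : ℤ) : ℝ := Real.sqrt (1 + (k : ℝ) ^ 2)

/-- The Gevrey `X^r` norm of a sequence of Fourier coefficients `f : ℤ → ℂ`,
with weight `e^{τ⟨k⟩^(2/3)}`:  `|f|_{X^r} = ‖⟨k⟩^r e^{τ⟨k⟩^(2/3)} f̂(k)‖_{ℓ²}`. -/
noncomputable def Xnorm (τ r : ℝ) (f : ℤ → ℂ) : ℝ :=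
  Real.sqrt (∑' k : ℤ,
    (jap k ^ r * Real.exp (τ * jap k ^ ((2 : ℝ) / 3)) * ‖f k‖) ^ 2)

/-- Fourier coefficients of a product: discrete convolution. -/
noncomputable def conv (f g : ℤ → ℂ) (k : ℤ) : ℂ := ∑' ℓ : ℤ, f (k - ℓ) * g ℓ

open MeasureTheory
open scoped ENNReal

open Complex in
theorem jap_eq_norm (k : ℤ) : jap k = ‖(1 : ℝ) + (k : ℝ) * I‖ := by
  rw [norm_add_mul_I, one_pow, jap]

theorem jap_pos (k : ℤ) : 0 < jap k := Real.sqrt_pos.2 (by positivity)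

theorem abs_le_jap (k : ℤ) : |(k : ℝ)| ≤ jap k :=
  Real.abs_le_sqrt (le_add_of_nonneg_left zero_le_one)

open Complex in
theorem jap_add_le (a b : ℤ) : jap (a + b) ≤ jap a + jap b := by
  have h : ((1 : ℝ) : ℂ) + ((a + b : ℤ) : ℝ) * I = ((1 : ℝ) + (a : ℝ) * I) + (b : ℝ) * I := by
    push_cast; ring
  calc jap (a + b) ≤ jap a + ‖((b : ℝ) : ℂ) * I‖ := by
        rw [jap_eq_norm, jap_eq_norm, h]; exact norm_add_le _ _
    _ ≤ jap a + jap b := by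
        rw [norm_mul, norm_I, mul_one, norm_real, Real.norm_eq_abs]
        gcongr
        exact abs_le_jap b

theorem jap_le_jap_sub_add_jap (k ℓ : ℤ) : jap k ≤ jap (k - ℓ) + jap ℓ := by
  simpa using jap_add_le (k - ℓ) ℓ

theorem jap_rpow_le_jap_sub_rpow_add_jap_rpow {p : ℝ} (hp₀ : 0 ≤ p) (hp₁ : p ≤ 1) (k ℓ : ℤ) :
    jap k ^ p ≤ jap (k - ℓ) ^ p + jap ℓ ^ p :=
  (Real.rpow_le_rpow (jap_pos k).le (jap_le_jap_sub_add_jap k ℓ) hp₀).trans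
    (Real.rpow_add_le_add_rpow (jap_pos _).le (jap_pos _).le hp₀ hp₁)

theorem Real.add_rpow_le_two_rpow_mul {a b r : ℝ} (ha : 0 ≤ a) (hb : 0 ≤ b) (hr : 0 ≤ r) :
    (a + b) ^ r ≤ 2 ^ r * (a ^ r + b ^ r) := by
  calc (a + b) ^ r ≤ (2 * max a b) ^ r := by
        gcongr; linarith [le_max_left a b, le_max_right a b]
    _ = 2 ^ r * max a b ^ r := Real.mul_rpow zero_le_two (le_max_of_le_left ha)
    _ ≤ 2 ^ r * (a ^ r + b ^ r) := by
        gcongr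
        rcases le_total a b with h | h
        · rw [max_eq_right h]; exact le_add_of_nonneg_left (by positivity)
        · rw [max_eq_left h]; exact le_add_of_nonneg_right (by positivity)

theorem summable_jap_rpow_neg_sq {s : ℝ} (hs : 1 / 2 < s) :
    Summable fun ℓ : ℤ => (jap ℓ ^ (-s)) ^ 2 := by
  refine (Real.summable_abs_int_rpow (b := 2 * s) (by linarith)).of_norm_bounded_eventually ?_
  filter_upwards [Filter.eventually_cofinite_ne 0] with ℓ hℓ
  have hsq : (jap ℓ ^ (-s)) ^ 2 = jap ℓ ^ (-(2 * s)) := by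
    rw [← Real.rpow_natCast, ← Real.rpow_mul (jap_pos ℓ).le]; ring_nf
  rw [Real.norm_of_nonneg (sq_nonneg _), hsq]
  exact Real.rpow_le_rpow_of_nonpos (abs_pos.2 (Int.cast_ne_zero.2 hℓ)) (abs_le_jap ℓ)
    (by linarith)

noncomputable def l2norm {ι : Type*} (u : ι → ℝ≥0∞) : ℝ≥0∞ := (∑' i, u i ^ 2) ^ (1 / 2 : ℝ)

section L2

variable {ι : Type*}

theorem l2norm_pow_two (u : ι → ℝ≥0∞) : l2norm u ^ 2 = ∑' i, u i ^ 2 := by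
  rw [l2norm, ← ENNReal.rpow_natCast, ← ENNReal.rpow_mul]
  norm_num

theorem l2norm_le_iff {u : ι → ℝ≥0∞} {c : ℝ≥0∞} : l2norm u ≤ c ↔ ∑' i, u i ^ 2 ≤ c ^ 2 := by
  rw [← l2norm_pow_two]
  exact (ENNReal.pow_le_pow_left_iff two_ne_zero).symm

theorem l2norm_mono {u v : ι → ℝ≥0∞} (h : u ≤ v) : l2norm u ≤ l2norm v := by
  unfold l2norm
  gcongr with i
  exact h i

theorem l2norm_const_mul (c : ℝ≥0∞) (u : ι → ℝ≥0∞) :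
    l2norm (fun i => c * u i) = c * l2norm u := by
  simp only [l2norm, mul_pow, ENNReal.tsum_mul_left]
  rw [ENNReal.mul_rpow_of_nonneg _ _ (by norm_num), ← ENNReal.rpow_natCast, ← ENNReal.rpow_mul]
  norm_num

theorem tsum_mul_le_l2norm_mul_l2norm (u v : ι → ℝ≥0∞) :
    ∑' i, u i * v i ≤ l2norm u * l2norm v := by
  let : MeasurableSpace ι := ⊤
  have := ENNReal.lintegral_mul_le_Lp_mul_Lq Measure.count Real.HolderConjugate.two_two
    (measurable_from_top (f := u)).aemeasurable (measurable_from_top (f := v)).aemeasurable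
  simpa [lintegral_count', measurable_from_top, l2norm] using this

theorem l2norm_add_le (u v : ι → ℝ≥0∞) : l2norm (u + v) ≤ l2norm u + l2norm v := by
  let : MeasurableSpace ι := ⊤
  have := ENNReal.lintegral_Lp_add_le (μ := Measure.count)
    (measurable_from_top (f := u)).aemeasurable (measurable_from_top (f := v)).aemeasurable
    one_le_two
  simpa [lintegral_count', measurable_from_top, l2norm] using this

theorem sqrt_tsum_sq_eq_toReal_l2norm (x : ι → ℝ) :
    √(∑' i, x i ^ 2) = (l2norm fun i => ‖x i‖ₑ).toReal := by
  rw [l2norm, ← ENNReal.toReal_rpow, ENNReal.tsum_toReal_eq (fun i => by finiteness),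
    Real.sqrt_eq_rpow]
  simp

theorem l2norm_enorm_ne_top {x : ι → ℝ} (hx : Summable fun i => x i ^ 2) :
    l2norm (fun i => ‖x i‖ₑ) ≠ ⊤ := by
  have h : ∑' i, ‖x i‖ₑ ^ 2 ≠ ⊤ := by
    simpa only [← enorm_pow] using tsum_enorm_ne_top_iff_summable_norm.2 hx.norm
  exact ENNReal.rpow_ne_top_of_nonneg (by norm_num) h

end L2

section Convolution

variable {G : Type*}

theorem tsum_sub_mul_sq_le [AddGroup G] (u v : G → ℝ≥0∞) (k : G) :
    (∑' ℓ, u (k - ℓ) * v ℓ) ^ 2 ≤ (∑' ℓ, u (k - ℓ) ^ 2 * v ℓ) * ∑' ℓ, v ℓ := by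
  have h := tsum_mul_le_l2norm_mul_l2norm (fun ℓ => u (k - ℓ) * v ℓ ^ (1 / 2 : ℝ))
    (fun ℓ => v ℓ ^ (1 / 2 : ℝ))
  have hsqrt (x : ℝ≥0∞) : (x ^ (1 / 2 : ℝ)) ^ 2 = x := by
    rw [← ENNReal.rpow_natCast, ← ENNReal.rpow_mul]
    norm_num
  calc (∑' ℓ, u (k - ℓ) * v ℓ) ^ 2
      ≤ (∑' ℓ, (u (k - ℓ) * v ℓ ^ (1 / 2 : ℝ)) ^ 2) * ∑' ℓ, (v ℓ ^ (1 / 2 : ℝ)) ^ 2 := by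
        rw [← l2norm_pow_two, ← l2norm_pow_two, ← mul_pow]
        gcongr
        simpa only [mul_assoc, ← sq, hsqrt] using h
    _ = (∑' ℓ, u (k - ℓ) ^ 2 * v ℓ) * ∑' ℓ, v ℓ := by simp only [mul_pow, hsqrt]

theorem l2norm_conv_le [AddGroup G] (u v : G → ℝ≥0∞) :
    l2norm (fun k => ∑' ℓ, u (k - ℓ) * v ℓ) ≤ l2norm u * ∑' ℓ, v ℓ := by
  have hshift (ℓ : G) : ∑' k, u (k - ℓ) ^ 2 = ∑' k, u k ^ 2 :=
    (Equiv.subRight ℓ).tsum_eq fun k => u k ^ 2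
  rw [l2norm_le_iff]
  calc ∑' k, (∑' ℓ, u (k - ℓ) * v ℓ) ^ 2
      ≤ ∑' k, (∑' ℓ, u (k - ℓ) ^ 2 * v ℓ) * ∑' ℓ, v ℓ :=
        ENNReal.tsum_le_tsum fun k => tsum_sub_mul_sq_le u v k
    _ = (∑' ℓ, v ℓ * ∑' k, u (k - ℓ) ^ 2) * ∑' ℓ, v ℓ := by
        rw [ENNReal.tsum_mul_right, ENNReal.tsum_comm]
        simp_rw [ENNReal.tsum_mul_right, mul_comm (v _)]
    _ = (l2norm u * ∑' ℓ, v ℓ) ^ 2 := by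
        simp_rw [hshift, ENNReal.tsum_mul_right, ← l2norm_pow_two]
        ring

theorem tsum_sub_mul_comm [AddCommGroup G] (u v : G → ℝ≥0∞) (k : G) :
    ∑' ℓ, u (k - ℓ) * v ℓ = ∑' ℓ, v (k - ℓ) * u ℓ := by
  rw [← (Equiv.subLeft k).tsum_eq (fun ℓ => v (k - ℓ) * u ℓ)]
  simp [mul_comm]

end Convolution

noncomputable def gevreyWeight (τ ρ : ℝ) (k : ℤ) : ℝ :=
  jap k ^ ρ * Real.exp (τ * jap k ^ ((2 : ℝ) / 3))

theorem gevreyWeight_nonneg (τ ρ : ℝ) (k : ℤ) : 0 ≤ gevreyWeight τ ρ k :=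
  mul_nonneg (Real.rpow_nonneg (jap_pos k).le ρ) (Real.exp_pos _).le

theorem exp_mul_jap_rpow_le {τ : ℝ} (hτ : 0 ≤ τ) (k ℓ : ℤ) :
    Real.exp (τ * jap k ^ ((2 : ℝ) / 3)) ≤
      Real.exp (τ * jap (k - ℓ) ^ ((2 : ℝ) / 3)) * Real.exp (τ * jap ℓ ^ ((2 : ℝ) / 3)) := by
  rw [← Real.exp_add, ← mul_add]
  gcongr
  exact jap_rpow_le_jap_sub_rpow_add_jap_rpow (by norm_num) (by norm_num) k ℓ

theorem gevreyWeight_le {τ r : ℝ} (hτ : 0 ≤ τ) (hr : 0 ≤ r) (k ℓ : ℤ) :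
    gevreyWeight τ r k ≤ 2 ^ r * (gevreyWeight τ r (k - ℓ) * gevreyWeight τ 0 ℓ +
      gevreyWeight τ 0 (k - ℓ) * gevreyWeight τ r ℓ) := by
  have hjap : jap k ^ r ≤ 2 ^ r * (jap (k - ℓ) ^ r + jap ℓ ^ r) :=
    (Real.rpow_le_rpow (jap_pos k).le (jap_le_jap_sub_add_jap k ℓ) hr).trans
      (Real.add_rpow_le_two_rpow_mul (jap_pos _).le (jap_pos _).le hr)
  calc gevreyWeight τ r k
      ≤ 2 ^ r * (jap (k - ℓ) ^ r + jap ℓ ^ r) *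
          (Real.exp (τ * jap (k - ℓ) ^ ((2 : ℝ) / 3)) * Real.exp (τ * jap ℓ ^ ((2 : ℝ) / 3))) :=
        mul_le_mul hjap (exp_mul_jap_rpow_le hτ k ℓ) (Real.exp_pos _).le
          ((Real.rpow_nonneg (jap_pos k).le r).trans hjap)
    _ = _ := by simp only [gevreyWeight, Real.rpow_zero, one_mul]; ring

theorem ofReal_gevreyWeight_le {τ r : ℝ} (hτ : 0 ≤ τ) (hr : 0 ≤ r) (k ℓ : ℤ) :
    ENNReal.ofReal (gevreyWeight τ r k) ≤ ENNReal.ofReal (2 ^ r) *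
      (ENNReal.ofReal (gevreyWeight τ r (k - ℓ)) * ENNReal.ofReal (gevreyWeight τ 0 ℓ) +
        ENNReal.ofReal (gevreyWeight τ 0 (k - ℓ)) * ENNReal.ofReal (gevreyWeight τ r ℓ)) := by
  simpa only [ENNReal.ofReal_mul, ENNReal.ofReal_add, gevreyWeight_nonneg, mul_nonneg,
    Real.rpow_nonneg, zero_le_two] using ENNReal.ofReal_le_ofReal (gevreyWeight_le hτ hr k ℓ)

noncomputable def gevreyCoeff (τ ρ : ℝ) (f : ℤ → ℂ) (k : ℤ) : ℝ≥0∞ :=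
  ENNReal.ofReal (gevreyWeight τ ρ k) * ‖f k‖ₑ

theorem gevreyCoeff_eq_enorm (τ ρ : ℝ) (f : ℤ → ℂ) :
    gevreyCoeff τ ρ f = fun k => ‖gevreyWeight τ ρ k * ‖f k‖‖ₑ := by
  ext k
  rw [gevreyCoeff, enorm_mul, Real.enorm_of_nonneg (gevreyWeight_nonneg τ ρ k), enorm_norm]

theorem Xnorm_eq_toReal_l2norm (τ ρ : ℝ) (f : ℤ → ℂ) :
    Xnorm τ ρ f = (l2norm (gevreyCoeff τ ρ f)).toReal := by
  rw [gevreyCoeff_eq_enorm]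
  exact sqrt_tsum_sq_eq_toReal_l2norm _

theorem l2norm_gevreyCoeff_ne_top {τ ρ : ℝ} {f : ℤ → ℂ}
    (hf : Summable fun k => (jap k ^ ρ * Real.exp (τ * jap k ^ ((2 : ℝ) / 3)) * ‖f k‖) ^ 2) :
    l2norm (gevreyCoeff τ ρ f) ≠ ⊤ := by
  rw [gevreyCoeff_eq_enorm]
  exact l2norm_enorm_ne_top hf

theorem gevreyCoeff_conv_le {τ r : ℝ} (hτ : 0 ≤ τ) (hr : 0 ≤ r) (f g : ℤ → ℂ) (k : ℤ) :
    gevreyCoeff τ r (conv f g) k ≤ ENNReal.ofReal (2 ^ r) *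
      (∑' ℓ, gevreyCoeff τ r f (k - ℓ) * gevreyCoeff τ 0 g ℓ +
        ∑' ℓ, gevreyCoeff τ 0 f (k - ℓ) * gevreyCoeff τ r g ℓ) := by
  calc gevreyCoeff τ r (conv f g) k
      ≤ ENNReal.ofReal (gevreyWeight τ r k) * ∑' ℓ, ‖f (k - ℓ)‖ₑ * ‖g ℓ‖ₑ := by
        rw [gevreyCoeff, conv]
        gcongr
        simpa only [enorm_mul] using enorm_tsum_le_tsum_enorm (f := fun ℓ => f (k - ℓ) * g ℓ)
    _ = ∑' ℓ, ENNReal.ofReal (gevreyWeight τ r k) * (‖f (k - ℓ)‖ₑ * ‖g ℓ‖ₑ) :=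
        ENNReal.tsum_mul_left.symm
    _ ≤ ∑' ℓ, ENNReal.ofReal (2 ^ r) * (gevreyCoeff τ r f (k - ℓ) * gevreyCoeff τ 0 g ℓ +
          gevreyCoeff τ 0 f (k - ℓ) * gevreyCoeff τ r g ℓ) := by
        refine ENNReal.tsum_le_tsum fun ℓ => ?_
        refine (mul_le_mul_left (ofReal_gevreyWeight_le hτ hr k ℓ) _).trans_eq ?_
        simp only [gevreyCoeff]
        ring
    _ = _ := by rw [ENNReal.tsum_mul_left, ENNReal.tsum_add]

theorem l2norm_gevreyCoeff_conv_le_mul_tsum {τ r : ℝ} (hτ : 0 ≤ τ) (hr : 0 ≤ r) (f g : ℤ → ℂ) :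
    l2norm (gevreyCoeff τ r (conv f g)) ≤ ENNReal.ofReal (2 ^ r) *
      (l2norm (gevreyCoeff τ r f) * ∑' ℓ, gevreyCoeff τ 0 g ℓ +
        l2norm (gevreyCoeff τ r g) * ∑' ℓ, gevreyCoeff τ 0 f ℓ) := by
  calc l2norm (gevreyCoeff τ r (conv f g))
      ≤ l2norm fun k => ENNReal.ofReal (2 ^ r) *
          (∑' ℓ, gevreyCoeff τ r f (k - ℓ) * gevreyCoeff τ 0 g ℓ +
            ∑' ℓ, gevreyCoeff τ r g (k - ℓ) * gevreyCoeff τ 0 f ℓ) := by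
        refine l2norm_mono fun k => (gevreyCoeff_conv_le hτ hr f g k).trans_eq ?_
        rw [tsum_sub_mul_comm (gevreyCoeff τ 0 f)]
    _ ≤ _ := by
        rw [l2norm_const_mul]
        gcongr
        refine (l2norm_add_le _ _).trans ?_
        gcongr <;> exact l2norm_conv_le _ _

theorem tsum_gevreyCoeff_zero_le (τ s : ℝ) (f : ℤ → ℂ) :
    ∑' ℓ, gevreyCoeff τ 0 f ℓ ≤
      l2norm (fun ℓ => ‖jap ℓ ^ (-s)‖ₑ) * l2norm (gevreyCoeff τ s f) := by
  have hsplit (ℓ : ℤ) : gevreyCoeff τ 0 f ℓ = ‖jap ℓ ^ (-s)‖ₑ * gevreyCoeff τ s f ℓ := by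
    have hpos : 0 ≤ jap ℓ ^ (-s) := Real.rpow_nonneg (jap_pos ℓ).le _
    rw [gevreyCoeff, gevreyCoeff, ← mul_assoc, Real.enorm_of_nonneg hpos,
      ← ENNReal.ofReal_mul hpos, gevreyWeight, gevreyWeight, ← mul_assoc,
      ← Real.rpow_add (jap_pos ℓ), neg_add_cancel]
  simp_rw [hsplit]
  exact tsum_mul_le_l2norm_mul_l2norm _ _

theorem l2norm_gevreyCoeff_conv_le {τ r : ℝ} (hτ : 0 ≤ τ) (hr : 0 ≤ r) (s : ℝ) (f g : ℤ → ℂ) :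
    l2norm (gevreyCoeff τ r (conv f g)) ≤
      ENNReal.ofReal (2 ^ r) * l2norm (fun ℓ => ‖jap ℓ ^ (-s)‖ₑ) *
        (l2norm (gevreyCoeff τ s f) * l2norm (gevreyCoeff τ r g) +
          l2norm (gevreyCoeff τ r f) * l2norm (gevreyCoeff τ s g)) := by
  set K := l2norm fun ℓ => ‖jap ℓ ^ (-s)‖ₑ
  calc l2norm (gevreyCoeff τ r (conv f g))
      ≤ ENNReal.ofReal (2 ^ r) * (l2norm (gevreyCoeff τ r f) * ∑' ℓ, gevreyCoeff τ 0 g ℓ +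
          l2norm (gevreyCoeff τ r g) * ∑' ℓ, gevreyCoeff τ 0 f ℓ) :=
        l2norm_gevreyCoeff_conv_le_mul_tsum hτ hr f g
    _ ≤ ENNReal.ofReal (2 ^ r) * (l2norm (gevreyCoeff τ r f) * (K * l2norm (gevreyCoeff τ s g)) +
          l2norm (gevreyCoeff τ r g) * (K * l2norm (gevreyCoeff τ s f))) := by
        gcongr <;> exact tsum_gevreyCoeff_zero_le τ s _
    _ = _ := by ring

/-- Gevrey product estimate:
`|fg|_{X^r} ≤ C |f|_{X^s}|g|_{X^r} + C |f|_{X^r}|g|_{X^s}` for `r ≥ 0`, `s > 1/2`. -/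
theorem gevrey_product_estimate (r s : ℝ) (hr : 0 ≤ r) (hs : 1 / 2 < s) :
    ∃ C : ℝ, 0 < C ∧ ∀ (τ : ℝ), 0 ≤ τ → ∀ f g : ℤ → ℂ,
      Summable (fun k : ℤ =>
        (jap k ^ r * Real.exp (τ * jap k ^ ((2 : ℝ) / 3)) * ‖f k‖) ^ 2) →
      Summable (fun k : ℤ =>
        (jap k ^ s * Real.exp (τ * jap k ^ ((2 : ℝ) / 3)) * ‖f k‖) ^ 2) →
      Summable (fun k : ℤ =>
        (jap k ^ r * Real.exp (τ * jap k ^ ((2 : ℝ) / 3)) * ‖g k‖) ^ 2) →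
      Summable (fun k : ℤ =>
        (jap k ^ s * Real.exp (τ * jap k ^ ((2 : ℝ) / 3)) * ‖g k‖) ^ 2) →
      (∀ k : ℤ, Summable (fun ℓ : ℤ => f (k - ℓ) * g ℓ)) →
      Xnorm τ r (conv f g) ≤
        C * Xnorm τ s f * Xnorm τ r g + C * Xnorm τ r f * Xnorm τ s g := by
  have hsum := summable_jap_rpow_neg_sq hs
  have hK : 0 < √(∑' ℓ : ℤ, (jap ℓ ^ (-s)) ^ 2) :=
    Real.sqrt_pos.2 (hsum.tsum_pos (fun _ => sq_nonneg _) 0 (by simp [jap]))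
  refine ⟨2 ^ r * √(∑' ℓ : ℤ, (jap ℓ ^ (-s)) ^ 2), by positivity,
    fun τ hτ f g hfr hfs hgr hgs _ => ?_⟩
  have hK_ne_top := l2norm_enorm_ne_top hsum
  have hfr_ne_top := l2norm_gevreyCoeff_ne_top hfr
  have hfs_ne_top := l2norm_gevreyCoeff_ne_top hfs
  have hgr_ne_top := l2norm_gevreyCoeff_ne_top hgr
  have hgs_ne_top := l2norm_gevreyCoeff_ne_top hgs
  simp only [sqrt_tsum_sq_eq_toReal_l2norm, Xnorm_eq_toReal_l2norm]
  refine (ENNReal.toReal_mono (by finiteness)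
    (l2norm_gevreyCoeff_conv_le hτ hr s f g)).trans_eq ?_
  rw [ENNReal.toReal_mul, ENNReal.toReal_add (by finiteness) (by finiteness)]
  simp only [ENNReal.toReal_mul, ENNReal.toReal_ofReal (by positivity : (0 : ℝ) ≤ 2 ^ r)]
  ring
end

section
/- Let ε > 0, k ∈ ℤ \ {0}, λ ≥ 1, ζ ∈ ℝ, and γ = √(ε²k² + λ⟨k⟩^{2/3} + iζ) with Re(γ) > 0. Then the multiplier m(y) = ε|k| e^{-ε|k| y} · (1 − e^{-(γ-ε|k|)y})/(γ − ε|k|) satisfies ‖m‖_{L²(0,∞)} ≤ C λ^{-1/4} ⟨k⟩^{-1/6} for a universal constant C. -/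
open MeasureTheory

/-!
With `a = ε|k|`, `b = λ^{1/2} ⟨k⟩^{1/3}` and `w = γ - a`, the equation for `γ²` gives
`(Re γ)² ≥ a² + b²`, so `Re w ≥ 0` and `|w| ≥ √(a² + b²) - a`. Pointwise,
`|m(y)| ≤ a y e^{-a y}` (from `|1 - e^{-z}| ≤ |z|` for `Re z ≥ 0`) and
`|m(y)| ≤ (2a/|w|) e^{-a y}`, whose squares integrate to `1/(4a)` and `2a/|w|²`.
The first is at most `4/b` when `b ≤ 2a`; otherwise `|w| ≥ b/2` and the second is.
-/

open Set

lemma norm_one_sub_exp_neg_le_norm {w : ℂ} (hw : 0 ≤ w.re) :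
    ‖1 - Complex.exp (-w)‖ ≤ ‖w‖ := by
  have hderiv : ∀ t ∈ Icc (0 : ℝ) 1, HasDerivWithinAt (fun t : ℝ ↦ Complex.exp (-t * w))
      (-w * Complex.exp (-t * w)) (Icc 0 1) t := fun t _ ↦ by
    have h := ((Complex.ofRealCLM.hasDerivAt (x := t)).neg.mul_const w).cexp
    simpa [mul_comm] using h.hasDerivWithinAt
  have hbound : ∀ t ∈ Ico (0 : ℝ) 1, ‖-w * Complex.exp (-t * w)‖ ≤ ‖w‖ := by
    intro t ht
    rw [norm_mul, norm_neg, Complex.norm_exp]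
    refine mul_le_of_le_one_right (norm_nonneg w) (Real.exp_le_one_iff.mpr ?_)
    simpa using mul_nonneg ht.1 hw
  simpa [norm_sub_rev] using norm_image_sub_le_of_norm_deriv_le_segment_01' hderiv hbound

lemma norm_one_sub_exp_neg_le_two {w : ℂ} (hw : 0 ≤ w.re) :
    ‖1 - Complex.exp (-w)‖ ≤ 2 := by
  have : ‖Complex.exp (-w)‖ ≤ 1 := by
    rw [Complex.norm_exp]
    exact Real.exp_le_one_iff.mpr (by simpa using hw)
  linarith [norm_sub_le (1 : ℂ) (Complex.exp (-w)), norm_one (α := ℂ)]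

lemma integral_mul_self_mul_exp_neg_mul_sq_Ioi {a : ℝ} (ha : 0 < a) :
    ∫ y in Ioi 0, (a * y * Real.exp (-(a * y))) ^ 2 = 1 / (4 * a) := by
  have hGamma :=
    Real.integral_rpow_mul_exp_neg_mul_Ioi (a := 3) (r := 2 * a) three_pos (by positivity)
  rw [show Real.Gamma 3 = 2 by simp [Real.Gamma_ofNat_eq_factorial]] at hGamma
  calc ∫ y in Ioi 0, (a * y * Real.exp (-(a * y))) ^ 2
      = a ^ 2 * ∫ y in Ioi 0, y ^ ((3 : ℝ) - 1) * Real.exp (-(2 * a * y)) := by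
        rw [← integral_const_mul]
        refine setIntegral_congr_fun measurableSet_Ioi fun y _ ↦ ?_
        rw [show (3 : ℝ) - 1 = (2 : ℕ) by norm_num, Real.rpow_natCast, mul_pow, mul_pow,
          ← Real.exp_nat_mul]
        ring_nf
    _ = 1 / (4 * a) := by
        rw [hGamma, show (3 : ℝ) = (3 : ℕ) by norm_num, Real.rpow_natCast]
        field_simp
        ring

lemma integral_const_mul_exp_neg_mul_sq_Ioi {a : ℝ} (ha : 0 < a) (c : ℝ) :
    ∫ y in Ioi 0, (c * Real.exp (-(a * y))) ^ 2 = c ^ 2 / (2 * a) := by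
  calc ∫ y in Ioi 0, (c * Real.exp (-(a * y))) ^ 2
      = c ^ 2 * ∫ y in Ioi 0, Real.exp (-(2 * a) * y) := by
        rw [← integral_const_mul]
        refine setIntegral_congr_fun measurableSet_Ioi fun y _ ↦ ?_
        rw [mul_pow, ← Real.exp_nat_mul]
        ring_nf
    _ = c ^ 2 / (2 * a) := by
        rw [integral_exp_mul_Ioi (by linarith) 0]
        simp [div_eq_mul_inv]

lemma setIntegral_norm_sq_le_of_norm_le {α E : Type*} [MeasurableSpace α] [NormedAddCommGroup E]
    {μ : Measure α} {s : Set α} (hs : MeasurableSet s) {f : α → E} {g : α → ℝ}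
    (hg : IntegrableOn (fun x ↦ g x ^ 2) s μ) (hfg : ∀ x ∈ s, ‖f x‖ ≤ g x) :
    ∫ x in s, ‖f x‖ ^ 2 ∂μ ≤ ∫ x in s, g x ^ 2 ∂μ :=
  integral_mono_of_nonneg (.of_forall fun _ ↦ by positivity) hg <|
    (ae_restrict_iff' hs).mpr <| .of_forall fun x hx ↦
      pow_le_pow_left₀ (norm_nonneg _) (hfg x hx) 2

/-- The multiplier `m` of the statement, with `a = ε|k|` and `w = γ - ε|k|`. -/
noncomputable def stokesMultiplier (a : ℝ) (w : ℂ) (y : ℝ) : ℂ :=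
  a * Complex.exp (-a * y) * ((1 - Complex.exp (-w * y)) / w)

section stokesMultiplier

variable {a : ℝ} {w : ℂ}

lemma norm_stokesMultiplier (ha : 0 ≤ a) (y : ℝ) :
    ‖stokesMultiplier a w y‖ =
      a * Real.exp (-(a * y)) * (‖1 - Complex.exp (-(w * y))‖ / ‖w‖) := by
  rw [stokesMultiplier, norm_mul, norm_mul, norm_div, Complex.norm_real, Real.norm_of_nonneg ha,
    Complex.norm_exp, neg_mul, neg_mul]
  norm_cast

lemma norm_stokesMultiplier_le_mul_mul_exp (ha : 0 ≤ a) (hw : 0 ≤ w.re) {y : ℝ} (hy : 0 ≤ y) :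
    ‖stokesMultiplier a w y‖ ≤ a * y * Real.exp (-(a * y)) := by
  have hwy : 0 ≤ (w * y).re := by simpa using mul_nonneg hw hy
  have hquot : ‖1 - Complex.exp (-(w * y))‖ / ‖w‖ ≤ y := by
    refine div_le_of_le_mul₀ (norm_nonneg _) hy ?_
    simpa [norm_mul, abs_of_nonneg hy, mul_comm] using norm_one_sub_exp_neg_le_norm hwy
  rw [norm_stokesMultiplier ha, mul_right_comm]
  gcongr

lemma norm_stokesMultiplier_le_div_norm_mul_exp (ha : 0 ≤ a) (hw : 0 ≤ w.re) {y : ℝ} (hy : 0 ≤ y) :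
    ‖stokesMultiplier a w y‖ ≤ 2 * a / ‖w‖ * Real.exp (-(a * y)) := by
  have hwy : 0 ≤ (w * y).re := by simpa using mul_nonneg hw hy
  have hquot : ‖1 - Complex.exp (-(w * y))‖ / ‖w‖ ≤ 2 / ‖w‖ := by
    gcongr
    exact norm_one_sub_exp_neg_le_two hwy
  calc ‖stokesMultiplier a w y‖ ≤ a * Real.exp (-(a * y)) * (2 / ‖w‖) := by
        rw [norm_stokesMultiplier ha]
        gcongr
    _ = 2 * a / ‖w‖ * Real.exp (-(a * y)) := by ring

lemma integral_norm_stokesMultiplier_sq_le (ha : 0 < a) (hw : 0 ≤ w.re) :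
    ∫ y in Ioi 0, ‖stokesMultiplier a w y‖ ^ 2 ≤
      min (1 / (4 * a)) (2 * a / ‖w‖ ^ 2) := by
  have hint_self := integral_mul_self_mul_exp_neg_mul_sq_Ioi ha
  have hint_const := integral_const_mul_exp_neg_mul_sq_Ioi ha (2 * a / ‖w‖)
  refine le_min ?_ ?_
  · refine hint_self ▸ setIntegral_norm_sq_le_of_norm_le measurableSet_Ioi
      (.of_integral_ne_zero (by rw [hint_self]; positivity)) fun y hy ↦ ?_
    exact norm_stokesMultiplier_le_mul_mul_exp ha.le hw (le_of_lt hy)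
  · have hsq : (2 * a / ‖w‖) ^ 2 / (2 * a) = 2 * a / ‖w‖ ^ 2 := by
      field_simp
    rw [← hsq, ← hint_const]
    refine setIntegral_norm_sq_le_of_norm_le measurableSet_Ioi ?_ fun y hy ↦
      norm_stokesMultiplier_le_div_norm_mul_exp ha.le hw (le_of_lt hy)
    have hexp_sq : IntegrableOn (fun y ↦ (1 * Real.exp (-(a * y))) ^ 2) (Ioi 0) :=
      .of_integral_ne_zero (by rw [integral_const_mul_exp_neg_mul_sq_Ioi ha 1]; positivity)
    have h := hexp_sq.const_mul ((2 * a / ‖w‖) ^ 2)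
    simp only [one_mul, ← mul_pow] at h
    exact h

end stokesMultiplier

lemma sqrt_re_sq_le_re {z : ℂ} (hz : 0 ≤ z.re) : √((z ^ 2).re) ≤ z.re := by
  rw [Real.sqrt_le_iff, sq, Complex.mul_re]
  exact ⟨hz, by nlinarith [mul_self_nonneg z.im]⟩

lemma sqrt_sub_le_re_sub_ofReal {γ : ℂ} {a b : ℝ} (hre : (γ ^ 2).re = a ^ 2 + b ^ 2)
    (hγ : 0 ≤ γ.re) : √(a ^ 2 + b ^ 2) - a ≤ (γ - a).re := by
  simpa [← hre] using sqrt_re_sq_le_re hγ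

lemma min_le_four_div_of_sqrt_sub_le {a b d : ℝ} (ha : 0 < a) (hb : 0 < b)
    (hd : √(a ^ 2 + b ^ 2) - a ≤ d) : min (1 / (4 * a)) (2 * a / d ^ 2) ≤ 4 / b := by
  rcases le_total b (2 * a) with hba | hab
  · refine (min_le_left _ _).trans ?_
    rw [div_le_div_iff₀ (by positivity) hb]
    linarith
  · have hb_le : b ≤ √(a ^ 2 + b ^ 2) := Real.le_sqrt_of_sq_le (by nlinarith)
    have hd' : b / 2 ≤ d := by linarith
    refine (min_le_right _ _).trans ?_
    rw [div_le_div_iff₀ (by nlinarith) hb]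
    nlinarith [mul_le_mul hd' hd' (by positivity) (by linarith)]

lemma sqrt_four_div_rpow_mul_rpow {x y : ℝ} (hx : 0 ≤ x) (hy : 0 ≤ y) :
    √(4 / (x ^ (1 / 2 : ℝ) * y ^ (1 / 3 : ℝ))) =
      2 * x ^ (-(1 : ℝ) / 4) * y ^ (-(1 : ℝ) / 6) := by
  have hsqrt_four : (4 : ℝ) ^ (1 / 2 : ℝ) = 2 := by
    rw [show (4 : ℝ) = 2 ^ (2 : ℝ) by norm_num, ← Real.rpow_mul zero_le_two]
    norm_num
  rw [Real.sqrt_eq_rpow, Real.div_rpow zero_le_four (by positivity), hsqrt_four,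
    Real.mul_rpow (by positivity) (by positivity), ← Real.rpow_mul hx, ← Real.rpow_mul hy,
    div_eq_mul_inv, mul_inv, ← Real.rpow_neg hx, ← Real.rpow_neg hy, mul_assoc]
  norm_num

/-- The boundary-layer multiplier
`m(y) = ε|k| e^{-ε|k|y} (1 - e^{-(γ-ε|k|)y})/(γ-ε|k|)` satisfies
`‖m‖_{L²(0,∞)} ≤ C λ^(-1/4) ⟨k⟩^(-1/6)` for a universal constant `C`. -/
theorem stokes_multiplier_L2_halfline :
    ∃ C : ℝ, 0 < C ∧
    ∀ (ε lam ζ : ℝ) (k : ℤ) (γ : ℂ), 0 < ε → k ≠ 0 → 1 ≤ lam →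
      γ ^ 2 = Complex.ofReal (ε ^ 2 * (k : ℝ) ^ 2 + lam * jap k ^ ((2 : ℝ) / 3))
                + Complex.I * Complex.ofReal ζ →
      0 < γ.re →
      Real.sqrt (∫ y in Set.Ioi (0 : ℝ),
          (‖((ε * |(k : ℝ)| : ℝ) * Complex.exp (-(ε * |(k : ℝ)| : ℝ) * y) *
            ((1 - Complex.exp (-(γ - (ε * |(k : ℝ)| : ℝ)) * y)) /
              (γ - (ε * |(k : ℝ)| : ℝ))))‖) ^ 2) ≤
        C * lam ^ (-(1 : ℝ) / 4) * jap k ^ (-(1 : ℝ) / 6) := by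
  refine ⟨2, two_pos, fun ε lam ζ k γ hε hk hlam hγ hγre ↦ ?_⟩
  set a : ℝ := ε * |(k : ℝ)|
  set b : ℝ := lam ^ (1 / 2 : ℝ) * jap k ^ (1 / 3 : ℝ)
  have ha : 0 < a := mul_pos hε (abs_pos.2 (Int.cast_ne_zero.2 hk))
  have hlam : 0 < lam := one_pos.trans_le hlam
  have hjap : 0 < jap k := Real.sqrt_pos.2 (by positivity)
  have hb : 0 < b := by positivity
  have hb_sq : b ^ 2 = lam * jap k ^ (2 / 3 : ℝ) := by
    rw [mul_pow, ← Real.rpow_mul_natCast hlam.le, ← Real.rpow_mul_natCast hjap.le]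
    norm_num
  have hre : (γ ^ 2).re = a ^ 2 + b ^ 2 := by
    simp only [hγ, hb_sq, a, mul_pow, sq_abs, Complex.add_re, Complex.ofReal_re, Complex.I_mul_re,
      Complex.ofReal_im, neg_zero, add_zero]
  have hw := sqrt_sub_le_re_sub_ofReal hre hγre.le
  have hw_nonneg : 0 ≤ (γ - a).re :=
    (sub_nonneg.2 (Real.le_sqrt_of_sq_le (by nlinarith))).trans hw
  calc _ ≤ √(4 / b) := Real.sqrt_le_sqrt <|
        (integral_norm_stokesMultiplier_sq_le ha hw_nonneg).trans
          (min_le_four_div_of_sqrt_sub_le ha hb (hw.trans (Complex.re_le_norm _)))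
    _ = 2 * lam ^ (-(1 : ℝ) / 4) * jap k ^ (-(1 : ℝ) / 6) :=
        sqrt_four_div_rpow_mul_rpow hlam.le hjap.le
end
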